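/- Let 0 < p ≤ 1 and let H be a complex Hilbert space. An operator B ∈ B(H)⁺ is invertible if and only if 𝔍(B) ⊆ 𝔍(A) for every A ∈ B(H)⁺, i.e. 𝔍(B) is the minimum of the family { 𝔍(A) : A ∈ B(H)⁺ } partially ordered by inclusion. -/

import Mathlib

open scoped NNReal

variable {H : Type*} [NormedAddCommGroup H] [InnerProductSpace ℂ H] [CompleteSpace H]

/-- `m` is the Kubo–Ando `p`-th power mean on positive operators: it is given by
`A 𝔪ₚ B = A^(1/2) ((1 + (A^(-1/2) B A^(-1/2))^p)/2)^(1/p) A^(1/2)` on invertible positive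
operators, and is determined on all positive operators by the strong limit
`(A 𝔪ₚ B) x = lim_{ε→0⁺} ((A + εI) 𝔪ₚ (B + εI)) x`. -/
def IsKuboAndoPowerMean (p : ℝ) (m : (H →L[ℂ] H) → (H →L[ℂ] H) → (H →L[ℂ] H)) : Prop :=
  (∀ A B : H →L[ℂ] H, 0 ≤ A → 0 ≤ B → IsUnit A → IsUnit B →
      m A B = A ^ ((2 : ℝ)⁻¹) *
        ((2 : ℝ)⁻¹ • (1 + (A ^ (-(2 : ℝ)⁻¹) * B * A ^ (-(2 : ℝ)⁻¹)) ^ p)) ^ p⁻¹ *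
        A ^ ((2 : ℝ)⁻¹)) ∧
  (∀ A B : H →L[ℂ] H, 0 ≤ A → 0 ≤ B → ∀ x : H,
      Filter.Tendsto (fun ε : ℝ => (m (A + ε • 1) (B + ε • 1)) x)
        (nhdsWithin 0 (Set.Ioi 0)) (nhds ((m A B) x)))

/-- `𝔍(A)`: the set of all operators of the form `(…((A 𝔪ₚ X₁) 𝔪ₚ X₂)…) 𝔪ₚ Xₙ` with
`n ≥ 1` and `X₁, …, Xₙ` positive operators. -/
def meanIterates (m : (H →L[ℂ] H) → (H →L[ℂ] H) → (H →L[ℂ] H)) (A : H →L[ℂ] H) :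
    Set (H →L[ℂ] H) :=
  {B | ∃ l : List (H →L[ℂ] H), l ≠ [] ∧ (∀ X ∈ l, 0 ≤ X) ∧ B = l.foldl m A}

/-!
For invertible positive `A` and `D` with `c • A ≤ D` and `2 cᵖ > 1`, the equation `A 𝔪ₚ X = D`
has an invertible positive solution: conjugating by `A^(1/2)` reduces it to inverting the scalar
function `t ↦ ((1 + tᵖ)/2)^(1/p)` on the spectrum of `A^(-1/2) D A^(-1/2)`, which lies in `[c, ∞)`.
Walking down the chain `A, cA, c²A, …` then reaches every invertible positive operator from every
invertible positive `A`. Passing to the limit from the invertible case gives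
`2^(-1/p) A ≤ A 𝔪ₚ X` and `2^(-1/p) X ≤ A 𝔪ₚ X`. Hence everything in `𝔍(B)` is invertible when `B`
is, and `A 𝔪ₚ 1 ∈ 𝔍(A)` is invertible for every positive `A`, so `𝔍(B) ⊆ 𝔍(A 𝔪ₚ 1) ⊆ 𝔍(A)`.
Conversely `B = B 𝔪ₚ B ∈ 𝔍(B) ⊆ 𝔍(1)`, and everything in `𝔍(1)` is invertible.
-/

open Filter Topology

section Scalar

variable {p : ℝ}

noncomputable def powerMeanFun (p : ℝ) (t : ℝ≥0) : ℝ≥0 := (2⁻¹ * (1 + t ^ p)) ^ p⁻¹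

/-- The inverse of `powerMeanFun p` on `{t | 1 ≤ 2 * t ^ p}`; elsewhere the truncated
subtraction of `ℝ≥0` makes it `0`. -/
noncomputable def powerMeanFunInv (p : ℝ) (t : ℝ≥0) : ℝ≥0 := (2 * t ^ p - 1) ^ p⁻¹

lemma continuous_powerMeanFun (hp : 0 < p) : Continuous (powerMeanFun p) := by
  unfold powerMeanFun
  fun_prop (disch := positivity)

lemma continuous_powerMeanFunInv (hp : 0 < p) : Continuous (powerMeanFunInv p) := by
  unfold powerMeanFunInv
  fun_prop (disch := positivity)

lemma inv_two_rpow_inv_le_powerMeanFun (hp : 0 < p) (t : ℝ≥0) :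
    (2⁻¹ : ℝ≥0) ^ p⁻¹ ≤ powerMeanFun p t := by
  unfold powerMeanFun
  gcongr
  exact le_mul_of_one_le_right (by positivity) le_self_add

lemma inv_two_rpow_inv_mul_le_powerMeanFun (hp : 0 < p) (t : ℝ≥0) :
    (2⁻¹ : ℝ≥0) ^ p⁻¹ * t ≤ powerMeanFun p t := by
  calc (2⁻¹ : ℝ≥0) ^ p⁻¹ * t = (2⁻¹ * t ^ p) ^ p⁻¹ := by
        rw [NNReal.mul_rpow, NNReal.rpow_rpow_inv hp.ne']
    _ ≤ powerMeanFun p t := by unfold powerMeanFun; gcongr; exact le_add_self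

lemma monotone_powerMeanFunInv (hp : 0 < p) : Monotone (powerMeanFunInv p) := by
  intro s t hst
  unfold powerMeanFunInv
  gcongr

lemma powerMeanFunInv_pos {t : ℝ≥0} (ht : 1 < 2 * t ^ p) : 0 < powerMeanFunInv p t :=
  NNReal.rpow_pos (tsub_pos_of_lt ht)

lemma powerMeanFun_powerMeanFunInv (hp : 0 < p) {t : ℝ≥0} (ht : 1 ≤ 2 * t ^ p) :
    powerMeanFun p (powerMeanFunInv p t) = t := by
  rw [powerMeanFun, powerMeanFunInv, NNReal.rpow_inv_rpow hp.ne', add_tsub_cancel_of_le ht,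
    inv_mul_cancel_left₀ two_ne_zero, NNReal.rpow_rpow_inv hp.ne']

end Scalar

lemma mul_mul_mul_cancel_of_mul_eq_one {M : Type*} [Monoid M] {u v b : M} (huv : u * v = 1)
    (hvu : v * u = 1) : u * (v * b * v) * u = b := by
  rw [← mul_assoc, ← mul_assoc, huv, one_mul, mul_assoc, hvu, mul_one]

lemma tendsto_add_smul_one {𝒜 : Type*} [NormedRing 𝒜] [NormedAlgebra ℝ 𝒜] (a : 𝒜) :
    Tendsto (fun ε : ℝ => a + ε • 1) (𝓝[>] 0) (𝓝 a) := by
  have : Continuous fun ε : ℝ => a + ε • (1 : 𝒜) := by fun_prop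
  simpa using this.tendsto' 0 _ (by simp) |>.mono_left nhdsWithin_le_nhds

section CStarAlgebra

open CFC

variable {𝒜 : Type*} [CStarAlgebra 𝒜] [PartialOrder 𝒜] [StarOrderedRing 𝒜] {p : ℝ}

lemma isStrictlyPositive_add_smul_one {a : 𝒜} (ha : 0 ≤ a) {ε : ℝ} (hε : 0 < ε) :
    IsStrictlyPositive (a + ε • 1) :=
  IsStrictlyPositive.nonneg_add ha (isStrictlyPositive_one.smul hε)

lemma IsStrictlyPositive.exists_pos_algebraMap_le {a : 𝒜} (ha : IsStrictlyPositive a) :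
    ∃ r : ℝ≥0, 0 < r ∧ algebraMap ℝ≥0 𝒜 r ≤ a := by
  rcases subsingleton_or_nontrivial 𝒜 with h𝒜 | h𝒜
  · exact ⟨1, one_pos, (Subsingleton.elim _ _).le⟩
  obtain ⟨r, hr, hra⟩ := (CFC.exists_pos_algebraMap_le_iff ha.isSelfAdjoint).2
    fun x hx => ha.spectrum_pos hx
  exact ⟨⟨r, hr.le⟩, hr, hra⟩

lemma algebraMap_le_iff_le_nnreal_spectrum {a : 𝒜} (ha : 0 ≤ a) {r : ℝ≥0} :
    algebraMap ℝ≥0 𝒜 r ≤ a ↔ ∀ t ∈ spectrum ℝ≥0 a, r ≤ t := by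
  have := cfc_nnreal_le_iff (fun _ => r) (fun t => t) a (.nnreal_of_nonneg ha) continuousOn_const
    continuousOn_id
  rwa [cfc_const r a, cfc_id' ℝ≥0 a] at this

lemma rpow_inv_two_mul_rpow_inv_two {a : 𝒜} (ha : 0 ≤ a) :
    a ^ ((2 : ℝ)⁻¹) * a ^ ((2 : ℝ)⁻¹) = a := by
  rw [← one_div, ← sqrt_eq_rpow, sqrt_mul_sqrt_self a ha]

lemma rpow_neg_inv_two_mul_self_mul_rpow_neg_inv_two {a : 𝒜} (ha : IsStrictlyPositive a) :
    a ^ (-(2 : ℝ)⁻¹) * a * a ^ (-(2 : ℝ)⁻¹) = 1 := by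
  simpa only [one_div] using conjugate_rpow_neg_one_half a ha

/-- The right-hand side of the first clause of `IsKuboAndoPowerMean`. -/
noncomputable def powerMean (p : ℝ) (a b : 𝒜) : 𝒜 :=
  a ^ ((2 : ℝ)⁻¹) * ((2 : ℝ)⁻¹ • (1 + (a ^ (-(2 : ℝ)⁻¹) * b * a ^ (-(2 : ℝ)⁻¹)) ^ p)) ^ p⁻¹ *
    a ^ ((2 : ℝ)⁻¹)

lemma smul_one_add_rpow_rpow_inv_eq_cfc (hp : 0 < p) {t : 𝒜} (ht : 0 ≤ t) :
    ((2 : ℝ)⁻¹ • (1 + t ^ p)) ^ p⁻¹ = cfc (powerMeanFun p) t := by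
  have hc : Continuous fun s : ℝ≥0 => s ^ p := NNReal.continuous_rpow_const hp.le
  have h : (2 : ℝ)⁻¹ • (1 + t ^ p) = cfc (fun s : ℝ≥0 => 2⁻¹ * (1 + s ^ p)) t := by
    rw [cfc_const_mul _ (fun s : ℝ≥0 => 1 + s ^ p) _ (continuous_const.add hc).continuousOn,
      cfc_const_add _ _ _ hc.continuousOn, rpow_def, map_one, NNReal.smul_def]
    norm_num
  rw [h, rpow_def, ← cfc_comp' (fun s : ℝ≥0 => s ^ p⁻¹) (fun s : ℝ≥0 => 2⁻¹ * (1 + s ^ p)) _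
    (NNReal.continuous_rpow_const (by positivity)).continuousOn
    (continuous_const.mul (continuous_const.add hc)).continuousOn]
  rfl

lemma powerMean_eq_cfc (hp : 0 < p) (a : 𝒜) {b : 𝒜} (hb : 0 ≤ b) :
    powerMean p a b = a ^ ((2 : ℝ)⁻¹) *
      cfc (powerMeanFun p) (a ^ (-(2 : ℝ)⁻¹) * b * a ^ (-(2 : ℝ)⁻¹)) * a ^ ((2 : ℝ)⁻¹) := by
  rw [powerMean, smul_one_add_rpow_rpow_inv_eq_cfc hp]
  exact conjugate_nonneg_of_nonneg hb rpow_nonneg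

lemma smul_le_powerMean_left (hp : 0 < p) {a b : 𝒜} (ha : 0 ≤ a) (hb : 0 ≤ b) :
    (2⁻¹ : ℝ≥0) ^ p⁻¹ • a ≤ powerMean p a b := by
  have ht : 0 ≤ a ^ (-(2 : ℝ)⁻¹) * b * a ^ (-(2 : ℝ)⁻¹) :=
    conjugate_nonneg_of_nonneg hb rpow_nonneg
  have hle := algebraMap_le_cfc (powerMeanFun p) ((2⁻¹ : ℝ≥0) ^ p⁻¹) _
    (fun t _ => inv_two_rpow_inv_le_powerMeanFun hp t) (continuous_powerMeanFun hp).continuousOn ht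
  have := IsSelfAdjoint.conjugate_le_conjugate hle
    (IsSelfAdjoint.of_nonneg (rpow_nonneg (a := a) (y := (2 : ℝ)⁻¹)))
  rwa [Algebra.algebraMap_eq_smul_one, mul_smul_one, smul_mul_assoc,
    rpow_inv_two_mul_rpow_inv_two ha, ← powerMean_eq_cfc hp a hb] at this

lemma smul_le_powerMean_right (hp : 0 < p) {a b : 𝒜} (ha : IsStrictlyPositive a) (hb : 0 ≤ b) :
    (2⁻¹ : ℝ≥0) ^ p⁻¹ • b ≤ powerMean p a b := by
  set t := a ^ (-(2 : ℝ)⁻¹) * b * a ^ (-(2 : ℝ)⁻¹)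
  have ht : 0 ≤ t := conjugate_nonneg_of_nonneg hb rpow_nonneg
  have hle : (2⁻¹ : ℝ≥0) ^ p⁻¹ • t ≤ cfc (powerMeanFun p) t := by
    rw [← cfc_const_mul_id (R := ℝ≥0) _ t]
    exact cfc_mono (fun s _ => inv_two_rpow_inv_mul_le_powerMeanFun hp s)
      (hg := (continuous_powerMeanFun hp).continuousOn)
  have := IsSelfAdjoint.conjugate_le_conjugate hle
    (IsSelfAdjoint.of_nonneg (rpow_nonneg (a := a) (y := (2 : ℝ)⁻¹)))
  rwa [mul_smul_comm, smul_mul_assoc, mul_mul_mul_cancel_of_mul_eq_one (rpow_mul_rpow_neg _ ha)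
    (rpow_neg_mul_rpow _ ha), ← powerMean_eq_cfc hp a hb] at this

lemma powerMean_self {a : 𝒜} (ha : IsStrictlyPositive a) : powerMean p a a = a := by
  rw [powerMean, rpow_neg_inv_two_mul_self_mul_rpow_neg_inv_two ha, one_rpow,
    ← two_smul ℝ (1 : 𝒜), smul_smul]
  norm_num
  simpa only [one_div] using rpow_inv_two_mul_rpow_inv_two ha.nonneg

lemma exists_powerMean_eq (hp : 0 < p) {a d : 𝒜} (ha : IsStrictlyPositive a) {c : ℝ≥0}
    (hc : 1 < 2 * c ^ p) (had : c • a ≤ d) :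
    ∃ x : 𝒜, IsStrictlyPositive x ∧ powerMean p a x = d := by
  set s := a ^ (-(2 : ℝ)⁻¹) * d * a ^ (-(2 : ℝ)⁻¹)
  have hs : 0 ≤ s :=
    conjugate_nonneg_of_nonneg ((smul_nonneg (by positivity) ha.nonneg).trans had) rpow_nonneg
  have hcs : algebraMap ℝ≥0 𝒜 c ≤ s := by
    have := IsSelfAdjoint.conjugate_le_conjugate had
      (IsSelfAdjoint.of_nonneg (rpow_nonneg (a := a) (y := -(2 : ℝ)⁻¹)))
    rwa [mul_smul_comm, smul_mul_assoc, rpow_neg_inv_two_mul_self_mul_rpow_neg_inv_two ha,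
      ← Algebra.algebraMap_eq_smul_one] at this
  have hs_spec : ∀ t ∈ spectrum ℝ≥0 s, c ≤ t := (algebraMap_le_iff_le_nnreal_spectrum hs).mp hcs
  have hgc := continuous_powerMeanFunInv hp
  set φ := cfc (powerMeanFunInv p) s
  have hφ : IsStrictlyPositive φ :=
    (isStrictlyPositive_algebraMap (powerMeanFunInv_pos hc)).of_le <|
      algebraMap_le_cfc _ _ _ (fun t ht => monotone_powerMeanFunInv hp (hs_spec t ht))
        hgc.continuousOn
  have hsqrt := IsStrictlyPositive.rpow a (2 : ℝ)⁻¹ ha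
  have hx := hφ.conjugate_of_isUnit_of_isSelfAdjoint _ _ hsqrt.isUnit hsqrt.isSelfAdjoint
  refine ⟨_, hx, ?_⟩
  rw [powerMean_eq_cfc hp a hx.nonneg, mul_mul_mul_cancel_of_mul_eq_one (rpow_neg_mul_rpow _ ha)
      (rpow_mul_rpow_neg _ ha), ← cfc_comp' _ _ _ (continuous_powerMeanFun hp).continuousOn
      hgc.continuousOn hs,
    cfc_congr (g := fun t => t) fun t ht => powerMeanFun_powerMeanFunInv hp ?_, cfc_id' ℝ≥0 s,
    mul_mul_mul_cancel_of_mul_eq_one (rpow_mul_rpow_neg _ ha) (rpow_neg_mul_rpow _ ha)]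
  calc 1 ≤ 2 * c ^ p := hc.le
    _ ≤ 2 * t ^ p := by gcongr; exact hs_spec t ht

end CStarAlgebra

section StrongLimit

open scoped ComplexOrder

variable {𝕜 E : Type*} [RCLike 𝕜] [NormedAddCommGroup E] [InnerProductSpace 𝕜 E]

lemma ContinuousLinearMap.le_of_tendsto_apply {ι : Type*} {l : Filter ι} [l.NeBot]
    {f g : ι → E →L[𝕜] E} {S T : E →L[𝕜] E} (hf : ∀ x, Tendsto (fun i => f i x) l (𝓝 (S x)))
    (hg : ∀ x, Tendsto (fun i => g i x) l (𝓝 (T x))) (hfg : ∀ᶠ i in l, f i ≤ g i) : S ≤ T := by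
  have hlim : ∀ x, Tendsto (fun i => (g i - f i) x) l (𝓝 ((T - S) x)) := fun x => by
    simpa using (hg x).sub (hf x)
  rw [le_def, isPositive_iff]
  refine ⟨fun x y => tendsto_nhds_unique ((hlim x).inner tendsto_const_nhds) ?_,
    fun x => ge_of_tendsto ((hlim x).inner tendsto_const_nhds) ?_⟩
  · refine (tendsto_const_nhds.inner (hlim y)).congr' ?_
    filter_upwards [hfg] with i hi using (((le_def _ _).mp hi).isSymmetric x y).symm
  · filter_upwards [hfg] with i hi using ((le_def _ _).mp hi).inner_nonneg_left x

end StrongLimit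

namespace IsKuboAndoPowerMean

variable {p : ℝ} {m : (H →L[ℂ] H) → (H →L[ℂ] H) → (H →L[ℂ] H)}

lemma eq_powerMean (hm : IsKuboAndoPowerMean p m) {A B : H →L[ℂ] H} (hA : IsStrictlyPositive A)
    (hB : IsStrictlyPositive B) : m A B = powerMean p A B :=
  hm.1 A B hA.nonneg hB.nonneg hA.isUnit hB.isUnit

lemma le_of_le_powerMean (hm : IsKuboAndoPowerMean p m)
    {F : (H →L[ℂ] H) → (H →L[ℂ] H) → (H →L[ℂ] H)} (hF : Continuous (Function.uncurry F))
    (hFm : ∀ a b, IsStrictlyPositive a → IsStrictlyPositive b → F a b ≤ powerMean p a b)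
    {A B : H →L[ℂ] H} (hA : 0 ≤ A) (hB : 0 ≤ B) : F A B ≤ m A B := by
  refine ContinuousLinearMap.le_of_tendsto_apply (l := 𝓝[>] 0)
    (f := fun ε : ℝ => F (A + ε • 1) (B + ε • 1)) (fun x => ?_) (hm.2 A B hA hB) ?_
  · have := (hF.tendsto (A, B)).comp
      ((tendsto_add_smul_one A).prodMk_nhds (tendsto_add_smul_one B))
    exact ((ContinuousLinearMap.apply ℂ H x).continuous.tendsto _).comp this
  · filter_upwards [self_mem_nhdsWithin] with ε hε
    have hAε := isStrictlyPositive_add_smul_one hA hε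
    have hBε := isStrictlyPositive_add_smul_one hB hε
    rw [hm.eq_powerMean hAε hBε]
    exact hFm _ _ hAε hBε

lemma smul_le_left (hm : IsKuboAndoPowerMean p m) (hp : 0 < p) {A B : H →L[ℂ] H} (hA : 0 ≤ A)
    (hB : 0 ≤ B) : (2⁻¹ : ℝ≥0) ^ p⁻¹ • A ≤ m A B :=
  hm.le_of_le_powerMean (F := fun a _ => (2⁻¹ : ℝ≥0) ^ p⁻¹ • a) (by fun_prop)
    (fun _ _ ha hb => smul_le_powerMean_left hp ha.nonneg hb.nonneg) hA hB

lemma smul_le_right (hm : IsKuboAndoPowerMean p m) (hp : 0 < p) {A B : H →L[ℂ] H} (hA : 0 ≤ A)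
    (hB : 0 ≤ B) : (2⁻¹ : ℝ≥0) ^ p⁻¹ • B ≤ m A B :=
  hm.le_of_le_powerMean (F := fun _ b => (2⁻¹ : ℝ≥0) ^ p⁻¹ • b) (by fun_prop)
    (fun _ _ ha hb => smul_le_powerMean_right hp ha hb.nonneg) hA hB

lemma self (hm : IsKuboAndoPowerMean p m) {A : H →L[ℂ] H} (hA : 0 ≤ A) : m A A = A := by
  ext x
  refine tendsto_nhds_unique (hm.2 A A hA hA x) ?_
  refine (((ContinuousLinearMap.apply ℂ H x).continuous.tendsto _).comp
    (tendsto_add_smul_one A)).congr' ?_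
  filter_upwards [self_mem_nhdsWithin] with ε hε
  have hAε := isStrictlyPositive_add_smul_one hA hε
  simp [hm.eq_powerMean hAε hAε, powerMean_self hAε]

lemma isStrictlyPositive_left (hm : IsKuboAndoPowerMean p m) (hp : 0 < p) {A B : H →L[ℂ] H}
    (hA : IsStrictlyPositive A) (hB : 0 ≤ B) : IsStrictlyPositive (m A B) :=
  (hA.smul (by positivity)).of_le (hm.smul_le_left hp hA.nonneg hB)

lemma isStrictlyPositive_right (hm : IsKuboAndoPowerMean p m) (hp : 0 < p) {A B : H →L[ℂ] H}
    (hA : 0 ≤ A) (hB : IsStrictlyPositive B) : IsStrictlyPositive (m A B) :=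
  (hB.smul (by positivity)).of_le (hm.smul_le_right hp hA hB.nonneg)

end IsKuboAndoPowerMean
section MeanIterates

variable {m : (H →L[ℂ] H) → (H →L[ℂ] H) → (H →L[ℂ] H)}

omit [CompleteSpace H] in
lemma apply_mem_meanIterates {A X : H →L[ℂ] H} (hX : 0 ≤ X) : m A X ∈ meanIterates m A :=
  ⟨[X], List.cons_ne_nil _ _, by simpa using hX, rfl⟩

omit [CompleteSpace H] in
lemma meanIterates_subset_of_mem {A C : H →L[ℂ] H} (hC : C ∈ meanIterates m A) :
    meanIterates m C ⊆ meanIterates m A := by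
  rintro D ⟨l₂, -, hl₂, rfl⟩
  obtain ⟨l₁, hl₁_ne, hl₁, rfl⟩ := hC
  refine ⟨l₁ ++ l₂, by simp [hl₁_ne], fun X hX => ?_, (List.foldl_append ..).symm⟩
  rcases List.mem_append.mp hX with hX | hX
  exacts [hl₁ X hX, hl₂ X hX]

namespace IsKuboAndoPowerMean

variable {p : ℝ}

lemma self_mem_meanIterates (hm : IsKuboAndoPowerMean p m) {A : H →L[ℂ] H} (hA : 0 ≤ A) :
    A ∈ meanIterates m A := by
  simpa only [hm.self hA] using apply_mem_meanIterates (m := m) (A := A) hA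

lemma isStrictlyPositive_of_mem_meanIterates (hm : IsKuboAndoPowerMean p m) (hp : 0 < p)
    {A D : H →L[ℂ] H} (hA : IsStrictlyPositive A) (hD : D ∈ meanIterates m A) :
    IsStrictlyPositive D := by
  obtain ⟨l, -, hl, rfl⟩ := hD
  induction l generalizing A with
  | nil => exact hA
  | cons X l ih =>
    exact ih (hm.isStrictlyPositive_left hp hA (hl X List.mem_cons_self))
      fun Y hY => hl Y (List.mem_cons_of_mem X hY)

lemma mem_meanIterates_of_smul_le (hm : IsKuboAndoPowerMean p m) (hp : 0 < p)
    {C D : H →L[ℂ] H} (hC : IsStrictlyPositive C) {c : ℝ≥0} (hc : 1 < 2 * c ^ p)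
    (hCD : c • C ≤ D) : D ∈ meanIterates m C := by
  obtain ⟨X, hX, rfl⟩ := exists_powerMean_eq hp hC hc hCD
  rw [← hm.eq_powerMean hC hX]
  exact apply_mem_meanIterates hX.nonneg

lemma mem_meanIterates_of_pow_smul_le (hm : IsKuboAndoPowerMean p m) (hp : 0 < p)
    {C : H →L[ℂ] H} (hC : IsStrictlyPositive C) {c : ℝ≥0} (hc₀ : 0 < c) (hc : 1 < 2 * c ^ p)
    (n : ℕ) {D : H →L[ℂ] H} (hCD : c ^ (n + 1) • C ≤ D) : D ∈ meanIterates m C := by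
  induction n generalizing D with
  | zero => exact hm.mem_meanIterates_of_smul_le hp hC hc (by simpa using hCD)
  | succ n ih =>
    refine meanIterates_subset_of_mem (ih le_rfl) <|
      hm.mem_meanIterates_of_smul_le hp (hC.smul (pow_pos hc₀ _)) hc ?_
    rwa [smul_smul, ← pow_succ']

lemma mem_meanIterates_of_isStrictlyPositive (hm : IsKuboAndoPowerMean p m) (hp : 0 < p)
    {C D : H →L[ℂ] H} (hC : IsStrictlyPositive C) (hD : IsStrictlyPositive D) :
    D ∈ meanIterates m C := by
  -- any `c < 1` with `2 * c ^ p > 1` will do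
  set c : ℝ≥0 := (3 / 4) ^ p⁻¹
  have hc : 1 < 2 * c ^ p := by
    rw [NNReal.rpow_inv_rpow hp.ne']
    norm_num
  have hc₁ : c < 1 := NNReal.rpow_lt_one (by norm_num) (by positivity)
  obtain ⟨d, hd, hdD⟩ := hD.exists_pos_algebraMap_le
  have hlim : Tendsto (fun n : ℕ => c ^ (n + 1) * ‖C‖₊) atTop (𝓝 0) := by
    simpa using ((NNReal.tendsto_pow_atTop_nhds_zero_of_lt_one hc₁).comp
      (tendsto_add_atTop_nat 1)).mul_const ‖C‖₊
  obtain ⟨n, hn⟩ := (hlim.eventually (gt_mem_nhds hd)).exists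
  refine hm.mem_meanIterates_of_pow_smul_le hp hC (by positivity) hc n (le_trans ?_ hdD)
  calc c ^ (n + 1) • C ≤ c ^ (n + 1) • algebraMap ℝ≥0 _ ‖C‖₊ :=
        smul_le_smul_of_nonneg_left hC.isSelfAdjoint.le_algebraMap_norm_self (by positivity)
    _ = algebraMap ℝ≥0 _ (c ^ (n + 1) * ‖C‖₊) := by rw [map_mul, Algebra.smul_def, map_pow]
    _ ≤ algebraMap ℝ≥0 _ d := algebraMap_mono _ hn.le

end IsKuboAndoPowerMean

end MeanIterates

theorem isUnit_iff_meanIterates_minimum_general (p : ℝ) (hp0 : 0 < p)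
    (m : (H →L[ℂ] H) → (H →L[ℂ] H) → (H →L[ℂ] H)) (hm : IsKuboAndoPowerMean p m)
    (B : H →L[ℂ] H) (hB : 0 ≤ B) :
    IsUnit B ↔ ∀ A : H →L[ℂ] H, 0 ≤ A → meanIterates m B ⊆ meanIterates m A := by
  refine ⟨fun hBu A hA D hD => ?_, fun h => ?_⟩
  · have hA1 : IsStrictlyPositive (m A 1) :=
      hm.isStrictlyPositive_right hp0 hA isStrictlyPositive_one
    have hD' := hm.isStrictlyPositive_of_mem_meanIterates hp0 (hBu.isStrictlyPositive hB) hD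
    exact meanIterates_subset_of_mem (apply_mem_meanIterates zero_le_one)
      (hm.mem_meanIterates_of_isStrictlyPositive hp0 hA1 hD')
  · have hB1 := h 1 zero_le_one (hm.self_mem_meanIterates hB)
    exact (hm.isStrictlyPositive_of_mem_meanIterates hp0 isStrictlyPositive_one hB1).isUnit

/-- For `0 < p ≤ 1`, a positive operator `B` is invertible iff `𝔍(B)` is
the minimum of the family `{𝔍(A) : A ∈ B(H)⁺}` ordered by inclusion, i.e. `𝔍(B) ⊆ 𝔍(A)`
for every positive operator `A`. -/
theorem isUnit_iff_meanIterates_minimum (p : ℝ) (hp0 : 0 < p) (hp1 : p ≤ 1)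
    (m : (H →L[ℂ] H) → (H →L[ℂ] H) → (H →L[ℂ] H)) (hm : IsKuboAndoPowerMean p m)
    (B : H →L[ℂ] H) (hB : 0 ≤ B) :
    IsUnit B ↔ ∀ A : H →L[ℂ] H, 0 ≤ A → meanIterates m B ⊆ meanIterates m A :=
  isUnit_iff_meanIterates_minimum_general p hp0 m hm B hB
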